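/- Let n ≥ 2 and 1 ≤ k ≤ n be integers, and let z ∈ (ℤ/2ℤ)^n have exactly j nonzero coordinates. Then the Fourier transform of the lazy k-flip measure P atz satisfies ∑_{v ∈ (ℤ/2ℤ)^n} P(v)·(−1)^{z·v} = 1/2 + (1/2)·∑_{a=0}^{k} (−1)^a · binom(j,a)·binom(n−j, k−a)/binom(n,k), i.e. it equals 1/2 plus half the j-th Krawtchouck polynomial evaluated at k. Here z·v denotes the number of coordinates where both z and v are nonzero, and (−1)^{z·v} is interpreted via any integer lift of that count. -/
import Mathlib


open Finset Polynomial

lemma key_sum (n k j : ℕ) (Z : Finset (Fin n)) (hz : Z.card = j) :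
    ∑ t ∈ (Finset.univ : Finset (Fin n)).powersetCard k, (-1:ℝ) ^ (Z ∩ t).card
      = ∑ a ∈ Finset.range (k+1),
          (-1:ℝ)^a * ((j.choose a * (n-j).choose (k-a) : ℕ) : ℝ) := by
  classical
  set P : ℝ[X] := ∏ i : Fin n, (C (if i ∈ Z then (-1:ℝ) else 1) * X + 1) with hP
  have hL : P.coeff k = ∑ t ∈ (Finset.univ : Finset (Fin n)).powersetCard k,
      (-1:ℝ) ^ (Z ∩ t).card := by
    rw [hP, Finset.prod_add]
    have : ∀ t ∈ (Finset.univ : Finset (Fin n)).powerset,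
        (∏ i ∈ t, C (if i ∈ Z then (-1:ℝ) else 1) * X) * ∏ i ∈ univ \ t, (1:ℝ[X])
          = C ((-1:ℝ) ^ (Z ∩ t).card) * X ^ t.card := by
      intro t _
      rw [Finset.prod_const_one, mul_one, Finset.prod_mul_distrib, Finset.prod_const,
        ← map_prod, Finset.prod_ite, Finset.prod_const, Finset.prod_const, one_pow, mul_one]
      congr 2
      rw [Finset.filter_mem_eq_inter, Finset.inter_comm]
    rw [Finset.sum_congr rfl this, finset_sum_coeff]
    simp only [coeff_C_mul, coeff_X_pow, mul_ite, mul_one, mul_zero]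
    rw [Finset.powersetCard_eq_filter, Finset.sum_filter]
    exact Finset.sum_congr rfl fun x _ => by simp [eq_comm]
  have hR : P = (C (-1) * X + 1) ^ j * (X + 1) ^ (n - j) := by
    rw [hP, ← Finset.prod_filter_mul_prod_filter_not Finset.univ (fun i => i ∈ Z)]
    congr 1
    · rw [Finset.prod_eq_pow_card (b := C (-1) * X + 1)
        (fun i hi => by simp only [Finset.mem_filter] at hi; rw [if_pos hi.2])]
      congr 1
      rw [Finset.filter_mem_eq_inter, Finset.univ_inter, hz]
    · rw [Finset.prod_eq_pow_card (b := X + 1)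
        (fun i hi => by simp only [Finset.mem_filter] at hi; rw [if_neg hi.2, map_one, one_mul])]
      congr 1
      have : Finset.univ.filter (fun i => i ∉ Z) = Zᶜ := by ext i; simp
      rw [this, Finset.card_compl, hz, Fintype.card_fin]
  rw [← hL, hR, Polynomial.coeff_mul, Finset.Nat.sum_antidiagonal_eq_sum_range_succ_mk]
  refine Finset.sum_congr rfl fun a ha => ?_
  have h1 : ((C (-1) * X + 1 : ℝ[X]) ^ j).coeff a = (-1:ℝ)^a * (j.choose a : ℝ) := by
    have e : (C (-1) * X + 1 : ℝ[X]) = -(X + C (-1)) := by rw [map_neg, map_one]; ring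
    rw [e, neg_pow, ← C_1, ← C_neg, ← C_pow, coeff_C_mul, coeff_X_add_C_pow]
    by_cases hja : a ≤ j
    · have h3 : (-1:ℝ)^j * (-1)^(j-a) = (-1)^a := by
        rw [← pow_add]
        have h2 : j + (j - a) = a + 2 * (j - a) := by omega
        rw [h2, pow_add, pow_mul, neg_one_sq, one_pow, mul_one]
      rw [← mul_assoc, h3]
    · rw [Nat.choose_eq_zero_of_lt (by omega)]; simp
  rw [h1, Polynomial.coeff_X_add_one_pow]
  push_cast
  ring


/-- The lazy walk on the hypercube `(ℤ/2ℤ)^n` that with probability `1/2` does nothing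
and with probability `1/2` flips a uniformly random set of `k` coordinates. -/
noncomputable def lazyFlip (n k : ℕ) : (Fin n → ZMod 2) → ℝ := fun v =>
  if v = 0 then 1 / 2
  else if (Finset.univ.filter fun i => v i ≠ 0).card = k then 1 / (2 * n.choose k)
  else 0

/-- The Fourier transform of the lazy `k`-flip measure at a character indexed by `z` with
exactly `j` nonzero coordinates equals `1/2` plus half the `j`-th Krawtchouck polynomial
evaluated at `k`. -/
theorem stmt_14 (n k j : ℕ) (hn : 2 ≤ n) (hk1 : 1 ≤ k) (hkn : k ≤ n)
    (z : Fin n → ZMod 2) (hz : (Finset.univ.filter fun i => z i ≠ 0).card = j) :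
    ∑ v : Fin n → ZMod 2, lazyFlip n k v *
        (-1 : ℝ) ^ ((Finset.univ.filter fun i => z i ≠ 0 ∧ v i ≠ 0).card)
      = 1 / 2 + (1 / 2) * ∑ a ∈ Finset.range (k + 1),
          (-1 : ℝ) ^ a * ((j.choose a * (n - j).choose (k - a) : ℕ) : ℝ) / n.choose k := by
  classical
  set Z : Finset (Fin n) := Finset.univ.filter fun i => z i ≠ 0 with hZdef
  have hC : (0:ℝ) < (n.choose k : ℝ) := by exact_mod_cast Nat.choose_pos hkn
  have hsplit : ∀ v : Fin n → ZMod 2, lazyFlip n k v =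
      (if v = 0 then (1/2:ℝ) else 0) +
      (if (Finset.univ.filter fun i => v i ≠ 0).card = k
        then 1/(2*(n.choose k : ℝ)) else 0) := by
    intro v
    unfold lazyFlip
    by_cases h : v = 0
    · subst h
      have h0 : (Finset.univ.filter fun i => (0 : Fin n → ZMod 2) i ≠ 0).card = 0 := by simp
      rw [if_pos rfl, if_pos rfl, h0, if_neg (by omega), add_zero]
    · rw [if_neg h, if_neg h, zero_add]
  simp only [hsplit, add_mul, Finset.sum_add_distrib]
  congr 1
  · -- the v = 0 part
    rw [Finset.sum_eq_single_of_mem 0 (Finset.mem_univ 0)]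
    · simp
    · intro v _ hv
      rw [if_neg hv, zero_mul]
  · -- the |v| = k part
    have hand : ∀ v : Fin n → ZMod 2,
        (Finset.univ.filter fun i => z i ≠ 0 ∧ v i ≠ 0)
          = Z ∩ (Finset.univ.filter fun i => v i ≠ 0) := by
      intro v; ext i; simp [hZdef]
    let e : (Fin n → ZMod 2) ≃ Finset (Fin n) :=
      { toFun := fun v => Finset.univ.filter fun i => v i ≠ 0
        invFun := fun S => fun i => if i ∈ S then 1 else 0
        left_inv := by
          intro v; funext i
          have : ∀ x : ZMod 2, (if x ≠ 0 then (1:ZMod 2) else 0) = x := by decide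
          simpa using this (v i)
        right_inv := by
          intro S; ext i; by_cases h : i ∈ S <;> simp [h] }
    have heq : ∑ v : Fin n → ZMod 2,
        (if (Finset.univ.filter fun i => v i ≠ 0).card = k
          then 1/(2*(n.choose k : ℝ)) else 0) *
          (-1 : ℝ) ^ ((Finset.univ.filter fun i => z i ≠ 0 ∧ v i ≠ 0).card)
        = ∑ S : Finset (Fin n),
            (if S.card = k then 1/(2*(n.choose k : ℝ)) else 0) * (-1:ℝ) ^ (Z ∩ S).card := by
      refine Fintype.sum_equiv e _ _ fun v => ?_
      rw [hand v]; rfl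
    rw [heq]
    have h2 : ∑ S : Finset (Fin n),
        (if S.card = k then 1/(2*(n.choose k : ℝ)) else 0) * (-1:ℝ) ^ (Z ∩ S).card
        = (1/(2*(n.choose k : ℝ))) *
          ∑ t ∈ (Finset.univ : Finset (Fin n)).powersetCard k, (-1:ℝ) ^ (Z ∩ t).card := by
      rw [Finset.mul_sum, Finset.powersetCard_eq_filter, ← Finset.powerset_univ,
        Finset.sum_filter]
      rw [Finset.powerset_univ]
      refine Finset.sum_congr rfl fun S _ => ?_
      by_cases h : S.card = k <;> simp [h]
    rw [h2, key_sum n k j Z hz]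
    rw [Finset.mul_sum, Finset.mul_sum]
    refine Finset.sum_congr rfl fun a _ => ?_
    field_simp
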